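/- The Laplace mechanism is ε-differentially private: let f : S → ℝ be a function with ℓ₁-sensitivity Δ = sup{|f(s) − f(s')| : s, s' adjacent}, and let M(s) = f(s) + Z where Z ~ Lap(Δ/ε) has density (ε/(2Δ))·e^{−ε|z|/Δ}. Then for all adjacent s, s' and all measurable sets R ⊆ ℝ, P(M(s) ∈ R) ≤ e^ε · P(M(s') ∈ R). -/

import Mathlib

/-!
The law of `M s` has density `x ↦ (2b)⁻¹ e^{-|x - f s|/b}` with `b = Δ/ε`. Moving the centre from
`f s'` to `f s` changes the exponent by at most `|f s - f s'|/b ≤ ε` (triangle inequality), so the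
density of `M s` is pointwise at most `e^ε` times that of `M s'`; integrating over `R` gives the bound.
-/

open MeasureTheory

namespace MeasureTheory.Measure

theorem withDensity_le_smul_withDensity {α : Type*} [MeasurableSpace α] {μ : Measure α}
    {f g : α → ENNReal} {c : ENNReal} (hc : c ≠ ⊤) (hfg : ∀ᵐ x ∂μ, f x ≤ c * g x) :
    μ.withDensity f ≤ c • μ.withDensity g := by
  rw [← withDensity_smul' c g hc]
  exact withDensity_mono hfg

end MeasureTheory.Measure

noncomputable def laplaceDensity (b a x : ℝ) : ENNReal :=
  ENNReal.ofReal ((2 * b)⁻¹ * Real.exp (-|x - a| / b))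

theorem laplaceDensity_div_eq (ε Δ a : ℝ) :
    laplaceDensity (Δ / ε) a =
      fun x => ENNReal.ofReal (ε / (2 * Δ) * Real.exp (-(ε * |x - a|) / Δ)) := by
  funext x
  simp only [laplaceDensity, mul_inv, inv_div, div_div_eq_mul_div]
  ring_nf

theorem Real.exp_neg_abs_sub_div_le (a a' x : ℝ) {b : ℝ} (hb : 0 ≤ b) :
    Real.exp (-|x - a| / b) ≤ Real.exp (|a - a'| / b) * Real.exp (-|x - a'| / b) := by
  rw [← Real.exp_add, Real.exp_le_exp, ← add_div]
  gcongr
  linarith [abs_sub_le x a a']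

theorem laplaceDensity_le_exp_mul (a a' x : ℝ) {b : ℝ} (hb : 0 ≤ b) :
    laplaceDensity b a x ≤ ENNReal.ofReal (Real.exp (|a - a'| / b)) * laplaceDensity b a' x := by
  rw [laplaceDensity, laplaceDensity, ← ENNReal.ofReal_mul (Real.exp_pos _).le, mul_left_comm]
  gcongr
  exact Real.exp_neg_abs_sub_div_le a a' x hb

theorem withDensity_laplaceDensity_le (μ : Measure ℝ) (a a' : ℝ) {b : ℝ} (hb : 0 ≤ b) :
    μ.withDensity (laplaceDensity b a) ≤
      ENNReal.ofReal (Real.exp (|a - a'| / b)) • μ.withDensity (laplaceDensity b a') :=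
  Measure.withDensity_le_smul_withDensity ENNReal.ofReal_ne_top
    (Filter.Eventually.of_forall (laplaceDensity_le_exp_mul a a' · hb))

theorem stmt13_general {S : Type*} (adj : S → S → Prop)
    (f : S → ℝ) (Δ ε : ℝ) (hΔ : 0 < Δ) (hε : 0 < ε)
    (hsens : ∀ s s', adj s s' → |f s - f s'| ≤ Δ)
    (M : S → Measure ℝ)
    (hM : ∀ s, M s = volume.withDensity
      (fun x => ENNReal.ofReal (ε / (2 * Δ) * Real.exp (-(ε * |x - f s|) / Δ)))) :
    ∀ s s', adj s s' → ∀ R : Set ℝ, MeasurableSet R →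
      M s R ≤ ENNReal.ofReal (Real.exp ε) * M s' R := by
  intro s s' hss' R _
  have hb : 0 < Δ / ε := div_pos hΔ hε
  have hM_laplace : ∀ s, M s = volume.withDensity (laplaceDensity (Δ / ε) (f s)) := fun s => by
    rw [hM, laplaceDensity_div_eq]
  have hshift : |f s - f s'| / (Δ / ε) ≤ ε := by
    rw [div_le_iff₀ hb, mul_div_cancel₀ _ hε.ne']
    exact hsens s s' hss'
  calc M s R
      ≤ (ENNReal.ofReal (Real.exp (|f s - f s'| / (Δ / ε))) • M s') R := by
        rw [hM_laplace, hM_laplace]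
        exact withDensity_laplaceDensity_le volume (f s) (f s') hb.le R
    _ ≤ ENNReal.ofReal (Real.exp ε) * M s' R := by
        rw [Measure.smul_apply, smul_eq_mul]
        gcongr

/-- The Laplace mechanism is `ε`-differentially private: if `f` has sensitivity at
most `Δ` over adjacent inputs and `M(s) = f(s) + Lap(Δ/ε)`, then for all adjacent
`s, s'` and measurable `R ⊆ ℝ`, `P(M(s) ∈ R) ≤ e^ε · P(M(s') ∈ R)`.  The law of
`M(s)` is the Laplace density `(ε/(2Δ))·e^{−ε|x−f(s)|/Δ}` w.r.t. Lebesgue measure. -/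
theorem stmt13 {S : Type*} (adj : S → S → Prop) (hadj : Symmetric adj)
    (f : S → ℝ) (Δ ε : ℝ) (hΔ : 0 < Δ) (hε : 0 < ε)
    (hsens : ∀ s s', adj s s' → |f s - f s'| ≤ Δ)
    (M : S → Measure ℝ)
    (hM : ∀ s, M s = volume.withDensity
      (fun x => ENNReal.ofReal (ε / (2 * Δ) * Real.exp (-(ε * |x - f s|) / Δ)))) :
    ∀ s s', adj s s' → ∀ R : Set ℝ, MeasurableSet R →
      M s R ≤ ENNReal.ofReal (Real.exp ε) * M s' R :=
  stmt13_general adj f Δ ε hΔ hε hsens M hM
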